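/- Let n ≥ 1, let A₋ ∈ Oₙ⁻, let v ∈ ℝⁿ be a unit vector, and set A₊ = A₋(I − 2 v vᵀ). Define s(z) = 1 − (1 + e^{√2 z})⁻¹ and Θ(z) = s(z) A₊ + (1 − s(z)) A₋. Then the function z ↦ (1/2)‖Θ'(z)‖² + F(Θ(z)) is integrable on ℝ and ∫_ℝ ((1/2)‖Θ'(z)‖² + F(Θ(z))) dz = 2√2/3. -/

import Mathlib

open Matrix MeasureTheory Set Filter Real Topology

attribute [local instance] Matrix.frobeniusNormedAddCommGroup Matrix.frobeniusNormedSpace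

noncomputable def sProfile (z : ℝ) : ℝ := 1 - (1 + Real.exp (Real.sqrt 2 * z))⁻¹

/-- The Saint Venant–Kirchhoff potential `F(A) = (1/4)‖AAᵀ − I‖²` with the Frobenius norm. -/
noncomputable def potF {n : ℕ} (A : Matrix (Fin n) (Fin n) ℝ) : ℝ :=
  (1 / 4) * ‖A * Aᵀ - 1‖ ^ 2


noncomputable def Pf (z : ℝ) : ℝ := 1 + Real.exp (Real.sqrt 2 * z)
noncomputable def gf (z : ℝ) : ℝ := 8 * Real.exp (Real.sqrt 2 * z) ^ 2 / Pf z ^ 4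
noncomputable def Gf (z : ℝ) : ℝ :=
  4 * Real.sqrt 2 * (1 / (3 * Pf z ^ 3) - 1 / (2 * Pf z ^ 2))

lemma Pf_pos (z : ℝ) : 0 < Pf z := by
  have := Real.exp_pos (Real.sqrt 2 * z); unfold Pf; linarith

lemma hasDerivAt_Pf (z : ℝ) :
    HasDerivAt Pf (Real.sqrt 2 * Real.exp (Real.sqrt 2 * z)) z := by
  have h : HasDerivAt (fun z : ℝ => Real.exp (Real.sqrt 2 * z))
      (Real.exp (Real.sqrt 2 * id z) * (Real.sqrt 2 * 1)) z :=
    ((hasDerivAt_id z).const_mul (Real.sqrt 2)).exp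
  have h1 := h.const_add 1
  unfold Pf
  simpa [mul_comm] using h1

lemma hasDerivAt_Gf (z : ℝ) : HasDerivAt Gf (gf z) z := by
  have hp := Pf_pos z
  have hp' : Pf z ≠ 0 := ne_of_gt hp
  have h3 : HasDerivAt (fun z => 3 * Pf z ^ 3)
      (3 * (3 * Pf z ^ 2 * (Real.sqrt 2 * Real.exp (Real.sqrt 2 * z)))) z :=
    (((hasDerivAt_Pf z).pow 3).const_mul 3).congr_deriv (by ring)
  have h2 : HasDerivAt (fun z => 2 * Pf z ^ 2)
      (2 * (2 * Pf z ^ 1 * (Real.sqrt 2 * Real.exp (Real.sqrt 2 * z)))) z :=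
    (((hasDerivAt_Pf z).pow 2).const_mul 2).congr_deriv (by ring)
  have hI3 := (h3.inv (by positivity))
  have hI2 := (h2.inv (by positivity))
  have h := ((hI3.sub hI2).const_mul (4 * Real.sqrt 2))
  have hone : (fun z => 4 * Real.sqrt 2 * ((3 * Pf z ^ 3)⁻¹ - (2 * Pf z ^ 2)⁻¹)) = Gf := by
    funext x; simp [Gf, one_div]
  rw [← hone]
  refine h.congr_deriv ?_
  have h2' : Real.sqrt 2 * Real.sqrt 2 = 2 := Real.mul_self_sqrt (by norm_num)
  have hPe : Pf z = 1 + Real.exp (Real.sqrt 2 * z) := rfl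
  rw [gf]
  have he : Real.exp (Real.sqrt 2 * z) = Pf z - 1 := by rw [hPe]; ring
  rw [he]
  field_simp
  ring_nf
  rw [Real.sq_sqrt (by norm_num : (0:ℝ) ≤ 2)]
  ring
lemma gf_nonneg (z : ℝ) : 0 ≤ gf z := by
  have := Pf_pos z; unfold gf; positivity

lemma gf_even (z : ℝ) : gf (-z) = gf z := by
  have hp := Pf_pos z
  have he := Real.exp_pos (Real.sqrt 2 * z)
  have hne : Real.exp (Real.sqrt 2 * z) ≠ 0 := ne_of_gt he
  unfold gf Pf
  rw [mul_neg, Real.exp_neg]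
  rw [div_eq_div_iff (by positivity) (by positivity)]
  field_simp
  ring

lemma tendsto_Pf_atTop : Tendsto Pf atTop atTop := by
  unfold Pf
  apply tendsto_atTop_add_const_left
  exact Real.tendsto_exp_atTop.comp
    (tendsto_id.const_mul_atTop (by positivity : (0:ℝ) < Real.sqrt 2))

lemma tendsto_Gf_atTop : Tendsto Gf atTop (𝓝 0) := by
  have key : ∀ k : ℕ, k ≠ 0 → ∀ c : ℝ, 0 < c →
      Tendsto (fun z => 1 / (c * Pf z ^ k)) atTop (𝓝 0) := by
    intro k hk c hc
    have h1 : Tendsto (fun z => Pf z ^ k) atTop atTop :=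
      (tendsto_pow_atTop hk).comp tendsto_Pf_atTop
    have h2 : Tendsto (fun z => c * Pf z ^ k) atTop atTop := h1.const_mul_atTop hc
    have h3 : Tendsto (fun z => (c * Pf z ^ k)⁻¹) atTop (𝓝 0) :=
      tendsto_inv_atTop_zero.comp h2
    simpa [one_div] using h3
  have h3 := key 3 (by norm_num) 3 (by norm_num)
  have h2 := key 2 (by norm_num) 2 (by norm_num)
  have h := ((h3.sub h2).const_mul (4 * Real.sqrt 2))
  have : Gf = fun z => 4 * Real.sqrt 2 * (1 / (3 * Pf z ^ 3) - 1 / (2 * Pf z ^ 2)) := rfl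
  rw [this]
  simpa using h

lemma tendsto_Gf_atBot : Tendsto Gf atBot (𝓝 (-(2 * Real.sqrt 2 / 3))) := by
  have hPf : Tendsto Pf atBot (𝓝 1) := by
    have he : Tendsto (fun z : ℝ => Real.exp (Real.sqrt 2 * z)) atBot (𝓝 0) :=
      Real.tendsto_exp_atBot.comp
        (tendsto_id.const_mul_atBot (by positivity : (0:ℝ) < Real.sqrt 2))
    have := he.const_add 1
    rw [add_zero] at this; exact this
  have hcont : ContinuousAt (fun p : ℝ =>
      4 * Real.sqrt 2 * (1 / (3 * p ^ 3) - 1 / (2 * p ^ 2))) 1 := by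
    apply ContinuousAt.mul continuousAt_const
    apply ContinuousAt.sub
    · exact ContinuousAt.div continuousAt_const (by fun_prop) (by norm_num)
    · exact ContinuousAt.div continuousAt_const (by fun_prop) (by norm_num)
  have h := hcont.tendsto.comp hPf
  have heq : (4 : ℝ) * Real.sqrt 2 * (1 / (3 * 1 ^ 3) - 1 / (2 * 1 ^ 2))
      = -(2 * Real.sqrt 2 / 3) := by ring
  rw [heq] at h
  exact h

lemma integrableOn_gf_Ioi : IntegrableOn gf (Ioi 0) := by
  apply integrableOn_Ioi_deriv_of_nonneg' (g := Gf) (fun x _ => hasDerivAt_Gf x)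
    (fun x _ => gf_nonneg x) tendsto_Gf_atTop

lemma integrable_gf : Integrable gf := by
  have hIoi := integrableOn_gf_Ioi
  have hIic : IntegrableOn gf (Iic 0) := by
    have hIci : IntegrableOn (fun z => gf (-z)) (Ici 0) := by
      rw [integrableOn_Ici_iff_integrableOn_Ioi]
      exact hIoi.congr_fun (fun x _ => (gf_even x).symm) measurableSet_Ioi
    have := (MeasurePreserving.integrableOn_comp_preimage
      (Measure.measurePreserving_neg (volume : Measure ℝ))
      (Homeomorph.neg ℝ).measurableEmbedding).2 hIci
    have hs : (Neg.neg : ℝ → ℝ) ⁻¹' (Ici (0:ℝ)) = Iic 0 := by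
      ext x; simp
    rw [hs] at this
    apply this.congr_fun (fun x _ => ?_) measurableSet_Iic
    simp [gf_even]
  rw [← integrableOn_univ, ← Set.Iic_union_Ioi (a := (0:ℝ))]
  exact hIic.union hIoi

lemma integral_gf : ∫ z : ℝ, gf z = 2 * Real.sqrt 2 / 3 := by
  have := integral_of_hasDerivAt_of_tendsto (f := Gf) (f' := gf)
    (fun x => hasDerivAt_Gf x) integrable_gf tendsto_Gf_atBot tendsto_Gf_atTop
  rw [this]; ring

lemma frob_sq {n : ℕ} (X : Matrix (Fin n) (Fin n) ℝ) :
    ‖X‖ ^ 2 = ∑ i, ∑ j, (X i j) ^ 2 := by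
  rw [Matrix.frobenius_norm_def]
  rw [← Real.rpow_natCast _ 2, ← Real.rpow_mul (by positivity)]
  norm_num


lemma norm_vecMulVec_sq {n : ℕ} (w u : Fin n → ℝ) :
    ‖Matrix.vecMulVec w u‖ ^ 2 = (∑ i, w i ^ 2) * (∑ j, u j ^ 2) := by
  rw [frob_sq]
  rw [Finset.sum_mul_sum]
  simp [Matrix.vecMulVec_apply, mul_pow]

lemma mul_vecMulVec {n : ℕ} (A : Matrix (Fin n) (Fin n) ℝ) (x y : Fin n → ℝ) :
    A * Matrix.vecMulVec x y = Matrix.vecMulVec (A *ᵥ x) y := by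
  ext i j
  simp [Matrix.mul_apply, Matrix.vecMulVec_apply, Matrix.mulVec, dotProduct,
    Finset.sum_mul, mul_assoc]

lemma vecMulVec_mul {n : ℕ} (A : Matrix (Fin n) (Fin n) ℝ) (x y : Fin n → ℝ) :
    Matrix.vecMulVec x y * A = Matrix.vecMulVec x (y ᵥ* A) := by
  ext i j
  simp [Matrix.mul_apply, Matrix.vecMulVec_apply, Matrix.vecMul, dotProduct,
    Finset.mul_sum, mul_assoc]

lemma vecMulVec_mul_vecMulVec {n : ℕ} (a b c d : Fin n → ℝ) :
    Matrix.vecMulVec a b * Matrix.vecMulVec c d = (b ⬝ᵥ c) • Matrix.vecMulVec a d := by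
  ext i j
  simp [Matrix.mul_apply, Matrix.vecMulVec_apply, dotProduct, Finset.sum_mul,
    Finset.mul_sum]
  rw [Finset.sum_congr rfl (fun k _ => by ring :
    ∀ k ∈ Finset.univ, a i * b k * (c k * d j) = b k * c k * (a i * d j))]

lemma vecMulVec_transpose {n : ℕ} (a b : Fin n → ℝ) :
    (Matrix.vecMulVec a b)ᵀ = Matrix.vecMulVec b a := by
  ext i j; simp [Matrix.vecMulVec_apply, mul_comm]

lemma hasDerivAt_sProfile (z : ℝ) :
    HasDerivAt sProfile (Real.sqrt 2 * Real.exp (Real.sqrt 2 * z) / Pf z ^ 2) z := by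
  have h := ((hasDerivAt_Pf z).inv (ne_of_gt (Pf_pos z))).const_sub 1
  have he : sProfile = fun z => 1 - (Pf z)⁻¹ := rfl
  rw [he]
  exact h.congr_deriv (by ring)

lemma sq_smul_norm {n : ℕ} (a : ℝ) (M : Matrix (Fin n) (Fin n) ℝ) :
    ‖a • M‖ ^ 2 = a ^ 2 * ‖M‖ ^ 2 := by
  rw [norm_smul, mul_pow, Real.norm_eq_abs, sq_abs]

lemma key_scalar (z : ℝ) :
    (1 / 2) * ((Real.sqrt 2 * Real.exp (Real.sqrt 2 * z) / Pf z ^ 2) ^ 2 * 4) +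
      1 / 4 * (((-2 * sProfile z) ^ 2 + 2 * (-2 * sProfile z)) ^ 2 * 1) = gf z := by
  have hp := Pf_pos z
  have hp' : Pf z ≠ 0 := ne_of_gt hp
  have he : Real.exp (Real.sqrt 2 * z) = Pf z - 1 := by unfold Pf; ring
  have hs : sProfile z = 1 - (Pf z)⁻¹ := rfl
  rw [gf, hs, he]
  field_simp
  ring_nf
  rw [Real.sq_sqrt (by norm_num : (0:ℝ) ≤ 2)]
  ring

theorem stmt9 {n : ℕ} (hn : 1 ≤ n) (Aminus : Matrix (Fin n) (Fin n) ℝ)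
    (hAm : Aminus * Aminusᵀ = 1) (hAmdet : Aminus.det = -1)
    (v : EuclideanSpace ℝ (Fin n)) (hv : ‖v‖ = 1)
    (Aplus : Matrix (Fin n) (Fin n) ℝ)
    (hAp : Aplus = Aminus * (1 - (2 : ℝ) • Matrix.vecMulVec (v : Fin n → ℝ) (v : Fin n → ℝ)))
    (Θ : ℝ → Matrix (Fin n) (Fin n) ℝ)
    (hΘ : Θ = fun z => sProfile z • Aplus + (1 - sProfile z) • Aminus) :
    Integrable (fun z => (1 / 2) * ‖deriv Θ z‖ ^ 2 + potF (Θ z)) ∧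
    ∫ z : ℝ, ((1 / 2) * ‖deriv Θ z‖ ^ 2 + potF (Θ z)) = 2 * Real.sqrt 2 / 3 := by
  set vv : Fin n → ℝ := (v : Fin n → ℝ) with hvv
  -- unit vector facts
  have hv2 : ∑ i, vv i ^ 2 = 1 := by
    have h := hv
    rw [EuclideanSpace.norm_eq] at h
    have h2 := Real.sqrt_eq_one.mp h
    simpa [Real.norm_eq_abs, sq_abs] using h2
  set w : Fin n → ℝ := Aminus *ᵥ vv with hwdef
  have hATA : Aminusᵀ * Aminus = 1 := mul_eq_one_comm.mp hAm
  have hwvm : w ᵥ* Aminus = vv := by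
    rw [hwdef, ← Matrix.vecMul_transpose, Matrix.vecMul_vecMul, hATA, Matrix.vecMul_one]
  have hw2 : ∑ i, w i ^ 2 = 1 := by
    have h : w ⬝ᵥ w = 1 := by
      rw [hwdef]
      rw [dotProduct_mulVec]
      rw [show (Aminus *ᵥ vv) ᵥ* Aminus = vv from hwvm]
      simpa [dotProduct, sq] using hv2
    simpa [dotProduct, sq] using h
  set W : Matrix (Fin n) (Fin n) ℝ := Matrix.vecMulVec w vv with hW
  set Wh : Matrix (Fin n) (Fin n) ℝ := Matrix.vecMulVec w w with hWh
  have hWnorm : ‖W‖ ^ 2 = 1 := by rw [hW, norm_vecMulVec_sq, hw2, hv2]; ring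
  have hWhnorm : ‖Wh‖ ^ 2 = 1 := by rw [hWh, norm_vecMulVec_sq, hw2]; ring
  have hD : Aplus - Aminus = (-2 : ℝ) • W := by
    rw [hAp, hW, Matrix.mul_sub, Matrix.mul_one, Matrix.mul_smul, _root_.mul_vecMulVec, ← hwdef]
    module
  have hΘc : ∀ z, Θ z = Aminus + (-2 * sProfile z) • W := by
    intro z
    rw [hΘ]
    beta_reduce
    have : sProfile z • Aplus + (1 - sProfile z) • Aminus
        = Aminus + sProfile z • (Aplus - Aminus) := by module
    rw [this, hD]
    module
  -- derivative
  have hΘd : ∀ z, HasDerivAt Θ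
      ((Real.sqrt 2 * Real.exp (Real.sqrt 2 * z) / Pf z ^ 2) • ((-2 : ℝ) • W)) z := by
    intro z
    have hΘfun : Θ = fun z => sProfile z • ((-2 : ℝ) • W) + Aminus := by
      funext x
      rw [hΘc x]
      module
    rw [hΘfun]
    exact ((hasDerivAt_sProfile z).smul_const _).add_const _
  have hderiv : ∀ z, ‖deriv Θ z‖ ^ 2
      = (Real.sqrt 2 * Real.exp (Real.sqrt 2 * z) / Pf z ^ 2) ^ 2 * 4 := by
    intro z
    rw [show deriv Θ z = _ from (hΘd z).deriv, smul_smul, sq_smul_norm, hWnorm]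
    ring
  -- potential
  have hTT : ∀ z, Θ z * (Θ z)ᵀ - 1
      = (((-2 * sProfile z)) ^ 2 + 2 * (-2 * sProfile z)) • Wh := by
    intro z
    set c : ℝ := -2 * sProfile z
    rw [hΘc z, Matrix.transpose_add, Matrix.transpose_smul, hW, vecMulVec_transpose]
    rw [Matrix.add_mul, Matrix.mul_add, Matrix.mul_add, hAm]
    rw [Matrix.mul_smul, _root_.mul_vecMulVec, ← hwdef, ← hWh]
    rw [Matrix.smul_mul, Matrix.smul_mul, Matrix.mul_smul]
    rw [_root_.vecMulVec_mul, Matrix.vecMul_transpose, hwdef]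
    rw [show Matrix.vecMulVec w vv * Matrix.vecMulVec vv w = (vv ⬝ᵥ vv) • Wh from
      vecMulVec_mul_vecMulVec w vv vv w]
    rw [show vv ⬝ᵥ vv = 1 by simpa [dotProduct, sq] using hv2, one_smul]
    rw [← hwdef, ← hWh]
    module
  have hpot : ∀ z, potF (Θ z)
      = 1 / 4 * (((-2 * sProfile z) ^ 2 + 2 * (-2 * sProfile z)) ^ 2 * 1) := by
    intro z
    rw [potF, hTT z, sq_smul_norm, hWhnorm]
  have hfun : (fun z => (1 / 2) * ‖deriv Θ z‖ ^ 2 + potF (Θ z)) = gf := by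
    funext z
    rw [hderiv z, hpot z, key_scalar z]
  rw [hfun]
  exact ⟨integrable_gf, integral_gf⟩
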